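/- arXiv:2012.13850 — 10 statements merged into one kernel-verified Lean document; each statement's English description precedes it below -/
import Mathlib

section
/- Let A be a reduced commutative ring and let M be an n × m matrix over A with more columns than rows (m > n). If the A-linear map A^m → A^n given by x ↦ M·x is injective, then 1 = 0 in A (i.e., A is the trivial ring). -/
/-- If a matrix over a reduced commutative ring with more columns than rows induces an
injective linear map, then the ring is trivial. -/
theorem injective_matrix_more_cols_of_reduced {A : Type*} [CommRing A] [IsReduced A]
    {n m : ℕ} (hnm : m > n) (M : Matrix (Fin n) (Fin m) A)
    (hinj : Function.Injective M.mulVecLin) :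
    (1 : A) = 0 := by
  by_contra h
  haveI : Nontrivial A := nontrivial_of_ne 1 0 h
  exact absurd (le_of_fin_injective A M.mulVecLin hinj) (by omega)
end

section
/- Let A be a reduced commutative ring and let M be an n × m matrix over A with more rows than columns (n > m). If the A-linear map A^m → A^n given by x ↦ M·x is surjective, then 1 = 0 in A (i.e., A is the trivial ring). -/
/-- If a matrix over a reduced commutative ring with more rows than columns induces a
surjective linear map, then the ring is trivial. -/
theorem surjective_matrix_more_rows_of_reduced {A : Type*} [CommRing A] [IsReduced A]
    {n m : ℕ} (hnm : n > m) (M : Matrix (Fin n) (Fin m) A)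
    (hsurj : Function.Surjective M.mulVecLin) :
    (1 : A) = 0 := by
  by_contra h
  haveI : Nontrivial A := ⟨1, 0, h⟩
  exact absurd (le_of_fin_surjective (R := A) M.mulVecLin hsurj) (not_le.2 hnm)
end

section
/- (McCoy's theorem) Let A be a commutative ring and let M be an n × m matrix over A such that the A-linear map A^m → A^n given by x ↦ M·x is injective. Then the ideal of m-minors of M is regular: for every x ∈ A, if x·d = 0 for every determinant d of an m × m submatrix of M obtained by selecting m of the n rows, then x = 0. -/
/-- McCoy's theorem: if a matrix over a commutative ring induces an injective linear map,
then the ideal of its maximal minors is regular. -/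
theorem mccoy {A : Type*} [CommRing A] {n m : ℕ} (M : Matrix (Fin n) (Fin m) A)
    (hinj : Function.Injective M.mulVecLin) (x : A)
    (hx : ∀ r : Fin m → Fin n, Function.Injective r → x * (M.submatrix r id).det = 0) :
    x = 0 := by
  by_contra hx0
  -- P t : there is a t-minor not annihilated by x
  set P : ℕ → Prop := fun t => ∃ (r : Fin t → Fin n) (c : Fin t → Fin m),
    Function.Injective r ∧ Function.Injective c ∧ x * (M.submatrix r c).det ≠ 0 with hPdef
  have hP0 : P 0 := ⟨Fin.elim0, Fin.elim0, fun a => a.elim0, fun a => a.elim0, by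
    simp [Matrix.det_fin_zero, hx0]⟩
  -- not P m
  have hPm : ¬ P m := by
    rintro ⟨r, c, hr, hc, hd⟩
    apply hd
    have hcb : Function.Bijective c := (Finite.injective_iff_bijective).mp hc
    set e : Equiv.Perm (Fin m) := Equiv.ofBijective c hcb with he
    have : M.submatrix r c = (M.submatrix r id).submatrix id e := by
      rw [Matrix.submatrix_submatrix]
      rfl
    rw [this, Matrix.det_permute', mul_left_comm, hx r hr, mul_zero]
  haveI : DecidablePred P := Classical.decPred P
  set t := Nat.findGreatest P m with ht
  have hPt : P t := Nat.findGreatest_spec (Nat.zero_le m) hP0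
  have htm : t < m := lt_of_le_of_ne (Nat.findGreatest_le m) (fun h => hPm (h ▸ hPt))
  obtain ⟨r, c, hr, hc, hd⟩ := hPt
  -- find a column not hit by c
  have hcs : ¬ Function.Surjective c := fun hs => by
    have := Fintype.card_le_of_surjective c hs
    simp only [Fintype.card_fin] at this
    omega
  rw [Function.Surjective] at hcs
  push_neg at hcs
  obtain ⟨c0, hc0⟩ := hcs
  set c' : Fin (t + 1) → Fin m := Fin.snoc c c0 with hc'
  have hc'inj : Function.Injective c' := by
    intro a b hab
    induction a using Fin.lastCases with
    | last =>
      induction b using Fin.lastCases with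
      | last => rfl
      | cast b =>
        simp only [hc', Fin.snoc_last, Fin.snoc_castSucc] at hab
        exact absurd hab.symm (hc0 b)
    | cast a =>
      induction b using Fin.lastCases with
      | last =>
        simp only [hc', Fin.snoc_last, Fin.snoc_castSucc] at hab
        exact absurd hab (hc0 a)
      | cast b =>
        simp only [hc', Fin.snoc_castSucc] at hab
        exact congrArg Fin.castSucc (hc hab)
  -- the cofactor vector
  set v : Fin m → A := fun j => ∑ k : Fin (t + 1), if c' k = j then
      x * ((-1) ^ (t + (k : ℕ)) *
        ((M.submatrix r (c' ∘ k.succAbove)).det)) else 0 with hv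
  -- v is in the kernel
  have hker : M.mulVec v = 0 := by
    funext i
    set B : Matrix (Fin (t + 1)) (Fin (t + 1)) A := M.submatrix (Fin.snoc r i) c' with hB
    have key : M.mulVec v i = x * B.det := by
      rw [Matrix.det_succ_row B (Fin.last t)]
      simp only [Matrix.mulVec, dotProduct, hv]
      simp_rw [Finset.mul_sum, mul_ite, mul_zero]
      rw [Finset.sum_comm]
      refine Finset.sum_congr rfl fun k _ => ?_
      rw [Finset.sum_ite_eq Finset.univ (c' k)
        (fun j => M i j * (x * ((-1) ^ (t + (k : ℕ)) * (M.submatrix r (c' ∘ k.succAbove)).det)))]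
      simp only [Finset.mem_univ, if_true]
      have h1 : B (Fin.last t) k = M i (c' k) := by
        simp [hB, Matrix.submatrix_apply, Fin.snoc_last]
      have h2 : B.submatrix (Fin.last t).succAbove k.succAbove
          = M.submatrix r (c' ∘ k.succAbove) := by
        rw [hB, Matrix.submatrix_submatrix, Fin.succAbove_last, Fin.snoc_comp_castSucc]
      rw [h1, h2, Fin.val_last]
      ring
    rw [key]
    by_cases hi : ∃ l, r l = i
    · obtain ⟨l, hl⟩ := hi
      have : B.det = 0 := by
        apply Matrix.det_zero_of_row_eq (i := Fin.castSucc l) (j := Fin.last t)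
          (Fin.ne_of_lt (Fin.castSucc_lt_last l))
        funext j
        simp [hB, Matrix.submatrix_apply, Fin.snoc_castSucc, Fin.snoc_last, hl]
      simp [this]
    · push_neg at hi
      have hrinj : Function.Injective (Fin.snoc r i : Fin (t + 1) → Fin n) := by
        intro a b hab
        induction a using Fin.lastCases with
        | last =>
          induction b using Fin.lastCases with
          | last => rfl
          | cast b =>
            simp only [Fin.snoc_last, Fin.snoc_castSucc] at hab
            exact absurd hab.symm (hi b)
        | cast a =>
          induction b using Fin.lastCases with
          | last =>
            simp only [Fin.snoc_last, Fin.snoc_castSucc] at hab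
            exact absurd hab (hi a)
          | cast b =>
            simp only [Fin.snoc_castSucc] at hab
            exact congrArg Fin.castSucc (hr hab)
      have hnP : ¬ P (t + 1) :=
        Nat.findGreatest_is_greatest (Nat.lt_succ_self t) htm
      by_contra hne
      exact hnP ⟨Fin.snoc r i, c', hrinj, hc'inj, hne⟩
  -- so v = 0
  have hv0 : v = 0 := by
    apply hinj
    simpa [Matrix.mulVecLin_apply] using hker
  -- but v (c' (last t)) = x * d ≠ 0
  have : v (c' (Fin.last t)) = x * (M.submatrix r c).det := by
    simp only [hv]
    rw [Finset.sum_eq_single (Fin.last t)]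
    · simp only [if_true, Fin.val_last]
      have h2 : c' ∘ (Fin.last t).succAbove = c := by
        rw [Fin.succAbove_last]
        exact Fin.snoc_comp_castSucc
      rw [h2]
      have : ((-1 : A)) ^ (t + t) = 1 := Even.neg_one_pow ⟨t, rfl⟩
      rw [this, one_mul]
    · intro k _ hk
      rw [if_neg (fun h => hk (hc'inj h))]
    · intro h
      exact absurd (Finset.mem_univ _) h
  rw [hv0] at this
  simp only [Pi.zero_apply] at this
  exact hd this.symm
end

section
/- Let A be a commutative ring and let M be an n × m matrix over A with m > 0 such that the A-linear map A^m → A^n given by x ↦ M·x is injective. If every entry of M is nilpotent, then 1 = 0 in A (i.e., A is the trivial ring). -/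
/-- If an injective matrix with at least one column has all entries nilpotent, then the
ring is trivial. -/
theorem injective_matrix_nilpotent_entries {A : Type*} [CommRing A] {n m : ℕ} (hm : m > 0)
    (M : Matrix (Fin n) (Fin m) A) (hinj : Function.Injective M.mulVecLin)
    (hnil : ∀ i j, IsNilpotent (M i j)) :
    (1 : A) = 0 := by
  set I : Ideal A := Ideal.span (Set.range fun p : Fin n × Fin m => M p.1 p.2) with hI
  have hle : I ≤ Ideal.radical ⊥ := by
    rw [Ideal.span_le]
    rintro x ⟨p, rfl⟩
    obtain ⟨k, hk⟩ := hnil p.1 p.2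
    exact ⟨k, by simpa using hk⟩
  have hfg : I.FG := Submodule.fg_span (Set.finite_range _)
  obtain ⟨k, hk⟩ := Ideal.exists_pow_le_of_le_radical_of_fg hle hfg
  -- key: if I ^ j = ⊥ then 1 = 0, by induction on j
  have key : ∀ j : ℕ, I ^ j ≤ ⊥ → (1 : A) = 0 := by
    intro j
    induction j with
    | zero =>
      intro h
      simpa using h (show (1 : A) ∈ I ^ 0 by simp)
    | succ j ih =>
      intro h
      apply ih
      intro a ha
      -- consider the vector a • single
      have hx : M.mulVecLin (Pi.single ⟨0, hm⟩ a) = 0 := by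
        funext i
        simp only [Matrix.mulVecLin_apply, Matrix.mulVec_single, Pi.zero_apply]
        have : M i ⟨0, hm⟩ * a ∈ I ^ (j + 1) := by
          rw [pow_succ']
          exact Ideal.mul_mem_mul (Ideal.subset_span ⟨(i, ⟨0, hm⟩), rfl⟩) ha
        simpa using h this
      have := hinj (hx.trans (map_zero M.mulVecLin).symm)
      have := congrFun this ⟨0, hm⟩
      simpa using this
  exact key k hk
end

section
/- Let B be a commutative ring and let f₁, …, f_m ∈ B be a partition of unity, i.e., 1 = f₁ + ⋯ + f_m. For each i let s_i be an element of the localization B[f_i⁻¹]. Assume that for all pairs of indices j, k the images of s_j and s_k in B[(f_j·f_k)⁻¹] agree. Then there is exactly one element s ∈ B such that for every index i the image of s in B[f_i⁻¹] equals s_i. -/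
open IsLocalization.Away in
lemma localization_gluing_compat_aux {B : Type*} [CommRing B] {x y x' y' : B}
    (hx : x = x') (hy : y = y')
    (zx : Localization.Away x) (zy : Localization.Away y)
    (h : awayToAwayRight (P := Localization.Away (x * y)) x y zx =
      awayToAwayLeft (P := Localization.Away (x * y)) y x zy) :
    awayToAwayRight (P := Localization.Away (x' * y')) x' y' (hx ▸ zx) =
      awayToAwayLeft (P := Localization.Away (x' * y')) y' x' (hy ▸ zy) := by
  subst hx; subst hy; exact h

lemma localization_gluing_cast_aux {B : Type*} [CommRing B] {x y : B} (h : x = y)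
    (z : Localization.Away x) (t : B)
    (ht : algebraMap B (Localization.Away y) t = h ▸ z) :
    algebraMap B (Localization.Away x) t = z := by
  subst h; exact ht

lemma localization_gluing_cast_aux2 {B : Type*} [CommRing B] {x y : B} (h : x = y)
    (t t' : B)
    (ht : algebraMap B (Localization.Away x) t = algebraMap B (Localization.Away x) t') :
    algebraMap B (Localization.Away y) t = algebraMap B (Localization.Away y) t' := by
  subst h; exact ht

open IsLocalization.Away in
lemma localization_gluing_inj_aux {B : Type*} [CommRing B] (x y : B)
    (hy : IsUnit (algebraMap B (Localization.Away x) y)) :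
    Function.Injective (awayToAwayRight (S := Localization.Away x)
      (P := Localization.Away (x * y)) x y) := by
  have hxy : IsUnit (algebraMap B (Localization.Away x) (x * y)) := by
    rw [map_mul]; exact (IsLocalization.Away.algebraMap_isUnit x).mul hy
  let back : Localization.Away (x * y) →+* Localization.Away x :=
    IsLocalization.Away.lift (x * y) hxy
  have hcomp : back.comp (awayToAwayRight (S := Localization.Away x)
      (P := Localization.Away (x * y)) x y) = RingHom.id _ := by
    apply IsLocalization.ringHom_ext (Submonoid.powers x)
    ext a
    simp [back, awayToAwayRight_eq, IsLocalization.Away.lift_eq]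
  intro u v h
  have hu := congrArg back h
  calc u = back (awayToAwayRight x y u) := (congrArg (· u) hcomp).symm
    _ = back (awayToAwayRight x y v) := hu
    _ = v := congrArg (· v) hcomp

/-- Gluing elements of localizations along a partition of unity: given `1 = f₁ + ⋯ + f_m`
and compatible elements `sᵢ ∈ B[fᵢ⁻¹]`, there is exactly one `s ∈ B` restricting to
each `sᵢ`. -/
theorem localization_gluing {B : Type*} [CommRing B] {m : ℕ} (f : Fin m → B)
    (hf : ∑ i, f i = 1) (s : ∀ i, Localization.Away (f i))
    (hcompat : ∀ j k : Fin m,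
      IsLocalization.Away.awayToAwayRight (P := Localization.Away (f j * f k))
          (f j) (f k) (s j) =
        IsLocalization.Away.awayToAwayLeft (P := Localization.Away (f j * f k))
          (f k) (f j) (s k)) :
    ∃! t : B, ∀ i, algebraMap B (Localization.Away (f i)) t = s i := by
  have span_eq : Ideal.span (Set.range f) = ⊤ := by
    rw [Ideal.eq_top_iff_one, ← hf]
    exact Ideal.sum_mem _ fun i _ => Ideal.subset_span ⟨i, rfl⟩
  set F : ∀ a : Set.range f, Localization.Away (a : B) :=
    fun a => a.2.choose_spec ▸ s a.2.choose with hF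
  have compat : ∀ a b : Set.range f,
      IsLocalization.Away.awayToAwayRight (P := Localization.Away ((a : B) * b))
        (a : B) b (F a) =
      IsLocalization.Away.awayToAwayLeft (P := Localization.Away ((a : B) * b))
        (b : B) a (F b) :=
    fun a b => localization_gluing_compat_aux a.2.choose_spec b.2.choose_spec _ _
      (hcompat a.2.choose b.2.choose)
  obtain ⟨t, ht, -⟩ :=
    Localization.existsUnique_algebraMap_eq_of_span_eq_top (Set.range f) span_eq F compat
  refine ⟨t, fun i => ?_, fun t' ht' => ?_⟩
  · set a : Set.range f := ⟨f i, ⟨i, rfl⟩⟩ with ha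
    set p := a.2.choose with hpdef
    have hp : f p = f i := a.2.choose_spec
    have hsp : algebraMap B (Localization.Away (f p)) t = s p :=
      localization_gluing_cast_aux hp _ t (ht a)
    have hu : IsUnit (algebraMap B (Localization.Away (f i)) (f p)) := by
      rw [hp]; exact IsLocalization.Away.algebraMap_isUnit (f i)
    apply localization_gluing_inj_aux (f i) (f p) hu
    rw [IsLocalization.Away.awayToAwayRight_eq, hcompat i p, ← hsp,
      IsLocalization.Away.awayToAwayLeft_eq]
  · apply Localization.algebraMap_injective_of_span_eq_top (Set.range f) span_eq
    funext a
    have hp : f a.2.choose = (a : B) := a.2.choose_spec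
    have hta : algebraMap B (Localization.Away (f a.2.choose)) t = s a.2.choose :=
      localization_gluing_cast_aux hp _ t (ht a)
    exact localization_gluing_cast_aux2 hp t' t ((ht' a.2.choose).trans hta.symm)
end

section
/- Let A be a commutative ring, let 𝔞 be a radical ideal of A and let (𝔟_i)_{i ∈ I} be a family of radical ideals of A. Then 𝔞 ∩ √(Σ_i 𝔟_i) = √(Σ_i (𝔞 ∩ 𝔟_i)), i.e., in the poset of radical ideals of A, finite meets distribute over the joins given by the radical of the sum; in particular the radical ideals of A form a frame. -/
/-- In the poset of radical ideals of a commutative ring, finite meets distribute over the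
joins given by the radical of the sum: `𝔞 ∩ √(Σᵢ 𝔟ᵢ) = √(Σᵢ (𝔞 ∩ 𝔟ᵢ))`. -/
theorem radical_ideal_frame_distrib {A : Type*} [CommRing A] {I : Type*}
    (a : Ideal A) (ha : a.IsRadical) (b : I → Ideal A) (hb : ∀ i, (b i).IsRadical) :
    a ⊓ (⨆ i, b i).radical = (⨆ i, a ⊓ b i).radical := by
  apply le_antisymm
  · rintro x ⟨hxa, n, hxn⟩
    refine ⟨n + 1, ?_⟩
    have h1 : x ^ (n + 1) ∈ (⨆ i, b i) * a := by
      rw [pow_succ]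
      exact Ideal.mul_mem_mul hxn hxa
    have h2 : (⨆ i, b i) * a ≤ ⨆ i, a ⊓ b i := by
      rw [mul_comm, ← smul_eq_mul, Submodule.smul_iSup]
      exact iSup_mono fun i => by rw [smul_eq_mul]; exact Ideal.mul_le_inf
    exact h2 h1
  · refine le_inf ?_ (Ideal.radical_mono (iSup_mono fun i => inf_le_right))
    calc (⨆ i, a ⊓ b i).radical ≤ a.radical :=
          Ideal.radical_mono (iSup_le fun i => inf_le_left)
      _ = a := ha.radical
end

section
/- (Locality of the spectrum) Let A be a commutative ring. Then A is a local ring if and only if for every family (𝔞_i)_{i ∈ I} of radical ideals of A with √(Σ_i 𝔞_i) = (1), there is an index i with 𝔞_i = (1). -/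
/-- Locality of the spectrum: a commutative ring `A` is local if and only if, whenever the
radical of the sum of a family of radical ideals is the unit ideal, one of the ideals is
already the unit ideal. -/
theorem isLocalRing_iff_radical_ideals {A : Type u} [CommRing A] :
    IsLocalRing A ↔
      ∀ {I : Type v} (a : I → Ideal A), (∀ i, (a i).IsRadical) →
        (⨆ i, a i).radical = ⊤ → ∃ i, a i = ⊤ := by
  constructor
  · intro hA I a hrad hsup
    by_contra hcon
    push_neg at hcon
    have hm := IsLocalRing.maximalIdeal.isMaximal A
    have hle : (⨆ i, a i) ≤ IsLocalRing.maximalIdeal A :=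
      iSup_le fun i => IsLocalRing.le_maximalIdeal (hcon i)
    have h2 : (⨆ i, a i).radical ≤ IsLocalRing.maximalIdeal A := by
      calc (⨆ i, a i).radical ≤ (IsLocalRing.maximalIdeal A).radical :=
            Ideal.radical_mono hle
        _ = IsLocalRing.maximalIdeal A := hm.isPrime.radical
    rw [hsup, top_le_iff] at h2
    exact hm.ne_top h2
  · intro h
    have hnt : Nontrivial A := by
      by_contra hnt
      have : Subsingleton A := not_nontrivial_iff_subsingleton.mp hnt
      obtain ⟨i, -⟩ := h (fun _ : PEmpty.{v+1} => ⊥) (fun i => i.elim)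
        (Subsingleton.elim _ _)
      exact i.elim
    refine IsLocalRing.of_isUnit_or_isUnit_of_isUnit_add fun x y hxy => ?_
    set a : ULift.{v} Bool → Ideal A := fun b => if b.down then (Ideal.span {x}).radical
      else (Ideal.span {y}).radical with ha
    have hxmem : x ∈ ⨆ i, a i := by
      refine le_iSup a ⟨true⟩ ?_
      simp only [ha, if_true]
      exact Ideal.le_radical (Ideal.subset_span rfl)
    have hymem : y ∈ ⨆ i, a i := by
      refine le_iSup a ⟨false⟩ ?_
      simp only [ha, if_false, Bool.false_eq_true]
      exact Ideal.le_radical (Ideal.subset_span rfl)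
    have htop : (⨆ i, a i) = ⊤ :=
      Ideal.eq_top_of_isUnit_mem _ (Ideal.add_mem _ hxmem hymem) hxy
    obtain ⟨b, hb⟩ := h a (fun b => by
      cases b with | up b => cases b <;> simp [ha] <;> exact Ideal.radical_isRadical _) (by
      rw [htop]; exact Ideal.radical_eq_top.mpr rfl)
    have key : ∀ z : A, (Ideal.span {z}).radical = ⊤ → IsUnit z := by
      intro z hz
      have h1 : (1 : A) ∈ (Ideal.span {z}).radical := hz ▸ Submodule.mem_top
      obtain ⟨n, hn⟩ := h1
      rw [one_pow] at hn
      exact Ideal.span_singleton_eq_top.mp ((Ideal.eq_top_iff_one _).mpr hn)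
    obtain ⟨b⟩ := b
    cases b with
    | true => exact Or.inl (key x (by simpa [ha] using hb))
    | false => exact Or.inr (key y (by simpa [ha] using hb))
end

section
/- (Field property of the structure sheaf, unrolled) Let A be a reduced commutative ring. Let f ∈ A, let x ∈ A[f⁻¹], and let g ∈ A. Assume that for every h ∈ A the following implication holds: if there exist n, m ∈ ℕ and p₁, …, p_m ∈ A with (fgh)^n = Σ_{i=1}^m fgh·p_i such that for each i there exists y ∈ A[(fgh·p_i)⁻¹] with (image of x)·y = 1 in A[(fgh·p_i)⁻¹], then fgh is nilpotent. Then the image of x in A[(fg)⁻¹] is 0. -/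
/-- Field property of the structure sheaf of a reduced ring, unrolled form. -/
theorem field_property_unrolled {A : Type*} [CommRing A] [IsReduced A]
    (f g : A) (x : Localization.Away f)
    (hyp : ∀ h : A,
      (∃ (n m : ℕ) (p : Fin m → A),
        (f * g * h) ^ n = ∑ i, f * g * h * p i ∧
        ∀ i, ∃ y : Localization.Away (f * (g * h * p i)),
          IsLocalization.Away.awayToAwayRight
              (P := Localization.Away (f * (g * h * p i))) f (g * h * p i) x * y = 1) →
      IsNilpotent (f * g * h)) :
    IsLocalization.Away.awayToAwayRight (P := Localization.Away (f * g)) f g x = 0 := by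
  -- write x = a / f^k
  obtain ⟨⟨a, s⟩, hx⟩ := IsLocalization.surj (Submonoid.powers f) x
  obtain ⟨k, hk⟩ := s.2
  -- apply hyp at h = a
  have key : IsNilpotent (f * g * a) := by
    refine hyp a ⟨2, 1, fun _ => f * g * a, by simp [sq], fun i => ?_⟩
    set c := f * (g * a * (f * g * a)) with hc
    -- in Localization.Away c, f and a are units
    have hfu : IsUnit (algebraMap A (Localization.Away c) f) :=
      IsLocalization.Away.isUnit_of_dvd (x := c) ⟨g * a * (f * g * a), rfl⟩
    have hau : IsUnit (algebraMap A (Localization.Away c) a) :=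
      IsLocalization.Away.isUnit_of_dvd (x := c) ⟨f * (g * (f * g * a)), by ring⟩
    obtain ⟨v, hv⟩ := hau.exists_right_inv
    refine ⟨algebraMap A _ (f ^ k) * v, ?_⟩
    have him : IsLocalization.Away.awayToAwayRight
        (P := Localization.Away c) f (g * a * (f * g * a)) x *
        algebraMap A (Localization.Away c) (f ^ k) =
        algebraMap A (Localization.Away c) a := by
      have := congrArg (IsLocalization.Away.awayToAwayRight
        (P := Localization.Away c) f (g * a * (f * g * a))) hx
      rwa [map_mul, IsLocalization.Away.awayToAwayRight_eq,
        IsLocalization.Away.awayToAwayRight_eq, show (s : A) = f ^ k from hk.symm] at this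
    calc IsLocalization.Away.awayToAwayRight (P := Localization.Away c) f
          (g * a * (f * g * a)) x * (algebraMap A _ (f ^ k) * v)
        = (IsLocalization.Away.awayToAwayRight (P := Localization.Away c) f
            (g * a * (f * g * a)) x * algebraMap A _ (f ^ k)) * v := by ring
      _ = algebraMap A (Localization.Away c) a * v := by rw [him]
      _ = 1 := hv
  have hfga : f * g * a = 0 := key.eq_zero
  -- now conclude
  have hfgu : IsUnit (algebraMap A (Localization.Away (f * g)) (f * g)) :=
    IsLocalization.Away.algebraMap_isUnit (f * g)
  have ha0 : algebraMap A (Localization.Away (f * g)) a = 0 := by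
    have : algebraMap A (Localization.Away (f * g)) (f * g) *
        algebraMap A (Localization.Away (f * g)) a = 0 := by
      rw [← map_mul, hfga, map_zero]
    exact (hfgu.mul_right_eq_zero).mp this
  have hfku : IsUnit (algebraMap A (Localization.Away (f * g)) (f ^ k)) :=
    by simpa [map_pow] using (IsLocalization.Away.isUnit_of_dvd (x := f * g) ⟨g, rfl⟩).pow k
  have him : IsLocalization.Away.awayToAwayRight (P := Localization.Away (f * g)) f g x *
      algebraMap A (Localization.Away (f * g)) (f ^ k) = 0 := by
    have := congrArg (IsLocalization.Away.awayToAwayRight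
      (P := Localization.Away (f * g)) f g) hx
    rw [map_mul, IsLocalization.Away.awayToAwayRight_eq,
      IsLocalization.Away.awayToAwayRight_eq, show (s : A) = f ^ k from hk.symm] at this
    rw [this, ha0]
  exact (hfku.mul_left_eq_zero).mp him
end

section
/- Let A be a commutative local ring and let M be an idempotent n × n matrix over A (M·M = M). Then M is similar to a diagonal matrix each of whose diagonal entries is 0 or 1: there exists an invertible n × n matrix P over A such that P·M·P⁻¹ is diagonal with all diagonal entries equal to 0 or 1. -/
open LinearMap Module

/-- A finitely generated projective module over a local ring is free. -/
theorem aux_free_of_proj {A : Type*} [CommRing A] [IsLocalRing A]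
    (M : Type*) [AddCommGroup M] [Module A M] [Module.Finite A M] [Module.Projective A M] :
    Module.Free A M := by
  have : Module.FinitePresentation A M := Module.finitePresentation_of_projective A M
  exact Module.free_of_flat_of_isLocalRing

/-- Over a commutative local ring, an idempotent square matrix is similar to a diagonal
matrix whose diagonal entries are all `0` or `1`. -/
theorem idempotent_matrix_similar_diagonal_of_local {A : Type*} [CommRing A] [IsLocalRing A]
    {n : ℕ} (M : Matrix (Fin n) (Fin n) A) (hM : M * M = M) :
    ∃ P : (Matrix (Fin n) (Fin n) A)ˣ,
      ((P : Matrix (Fin n) (Fin n) A) * M * ((P⁻¹ : (Matrix (Fin n) (Fin n) A)ˣ) :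
          Matrix (Fin n) (Fin n) A)).IsDiag ∧
      ∀ i : Fin n,
        ((P : Matrix (Fin n) (Fin n) A) * M * ((P⁻¹ : (Matrix (Fin n) (Fin n) A)ˣ) :
            Matrix (Fin n) (Fin n) A)) i i = 0 ∨
        ((P : Matrix (Fin n) (Fin n) A) * M * ((P⁻¹ : (Matrix (Fin n) (Fin n) A)ˣ) :
            Matrix (Fin n) (Fin n) A)) i i = 1 := by
  classical
  set f : (Fin n → A) →ₗ[A] (Fin n → A) := Matrix.toLin' M with hfdef
  have hff : f ∘ₗ f = f := by
    rw [hfdef, ← Matrix.toLin'_mul, hM]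
  have hffx : ∀ x, f (f x) = f x := fun x => LinearMap.congr_fun hff x
  -- f is a projection onto its range
  have hproj : LinearMap.IsProj (LinearMap.range f) f :=
    ⟨fun x => LinearMap.mem_range_self f x,
     fun x hx => by obtain ⟨y, rfl⟩ := hx; exact hffx y⟩
  have hcompl : IsCompl (LinearMap.range f) (LinearMap.ker f) := hproj.isCompl
  -- range f and ker f are finite and projective, hence free
  have hkerr : LinearMap.ker f = LinearMap.range (LinearMap.id - f) := by
    ext x
    constructor
    · intro hx
      exact ⟨x, by simp [LinearMap.mem_ker.mp hx]⟩
    · rintro ⟨y, rfl⟩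
      simp [LinearMap.mem_ker, map_sub, hffx y]
  have hfin₁ : Module.Finite A (LinearMap.range f) := Module.Finite.range f
  have hfin₂ : Module.Finite A (LinearMap.ker f) := by
    rw [hkerr]; exact Module.Finite.range _
  have hproj₁ : Module.Projective A (LinearMap.range f) :=
    Module.Projective.of_split (LinearMap.range f).subtype
      (hproj.codRestrict) (by ext x; simpa using hproj.map_id x x.2)
  have hproj₂ : Module.Projective A (LinearMap.ker f) := by
    have hproj' : LinearMap.IsProj (LinearMap.ker f) (LinearMap.id - f) := by
      constructor
      · intro x
        simp [LinearMap.mem_ker, map_sub, hffx x]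
      · intro x hx
        simp [LinearMap.mem_ker.mp hx]
    exact Module.Projective.of_split (LinearMap.ker f).subtype
      (hproj'.codRestrict) (by ext x; simpa using hproj'.map_id x x.2)
  have hfree₁ : Module.Free A (LinearMap.range f) := aux_free_of_proj (A := A) _
  have hfree₂ : Module.Free A (LinearMap.ker f) := aux_free_of_proj (A := A) _
  -- dimensions
  set k := Module.finrank A (LinearMap.range f)
  set m := Module.finrank A (LinearMap.ker f)
  let eprod : (LinearMap.range f × LinearMap.ker f) ≃ₗ[A] (Fin n → A) :=
    Submodule.prodEquivOfIsCompl _ _ hcompl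
  have hkm : k + m = n := by
    have h1 := eprod.finrank_eq
    rw [Module.finrank_prod] at h1
    simpa [k, m, Module.finrank_pi] using h1
  -- bases
  let b₁ : Basis (Fin k) A (LinearMap.range f) := Module.finBasis A _
  let b₂ : Basis (Fin m) A (LinearMap.ker f) := Module.finBasis A _
  let eIdx : (Fin k ⊕ Fin m) ≃ Fin n := finSumFinEquiv.trans (finCongr hkm)
  let b : Basis (Fin n) A (Fin n → A) := (((b₁.prod b₂).map eprod).reindex eIdx)
  -- diagonal values
  let d : Fin n → A := fun j => Sum.elim (fun _ => (1 : A)) (fun _ => (0 : A)) (eIdx.symm j)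
  have hfb : ∀ j, f (b j) = d j • b j := by
    intro j
    have hb : b j = eprod ((b₁.prod b₂) (eIdx.symm j)) := by
      simp [b, Basis.reindex_apply, Basis.map_apply]
    rcases h : eIdx.symm j with i | i
    · have : b j = (b₁ i : Fin n → A) := by
        rw [hb, h]
        simp [eprod, Basis.prod_apply, Submodule.coe_prodEquivOfIsCompl]
      rw [this]
      simp only [d, h, Sum.elim_inl, one_smul]
      exact hproj.map_id _ (b₁ i).2
    · have : b j = (b₂ i : Fin n → A) := by
        rw [hb, h]
        simp [eprod, Basis.prod_apply, Submodule.coe_prodEquivOfIsCompl]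
      rw [this]
      simp only [d, h, Sum.elim_inr, zero_smul]
      exact LinearMap.mem_ker.mp (b₂ i).2
  -- the matrix of f in basis b is diagonal
  have hdiag : LinearMap.toMatrix b b f = Matrix.diagonal d := by
    ext i j
    rw [LinearMap.toMatrix_apply, hfb j, map_smul]
    simp only [Basis.repr_self, Finsupp.smul_single, smul_eq_mul, mul_one]
    rw [Finsupp.single_apply, Matrix.diagonal_apply]
    by_cases hij : i = j
    · subst hij; simp
    · simp [hij, Ne.symm hij]
  -- change of basis
  let e : Basis (Fin n) A (Fin n → A) := Pi.basisFun A (Fin n)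
  let P : (Matrix (Fin n) (Fin n) A)ˣ :=
    ⟨b.toMatrix e, e.toMatrix b,
      Basis.toMatrix_mul_toMatrix_flip _ _, Basis.toMatrix_mul_toMatrix_flip _ _⟩
  have hMe : LinearMap.toMatrix e e f = M := by
    rw [hfdef]
    rw [LinearMap.toMatrix_eq_toMatrix']
    exact LinearMap.toMatrix'_toLin' M
  have hPinv : ((P⁻¹ : (Matrix (Fin n) (Fin n) A)ˣ) : Matrix (Fin n) (Fin n) A)
      = e.toMatrix b := rfl
  have key : (P : Matrix (Fin n) (Fin n) A) * M *
      ((P⁻¹ : (Matrix (Fin n) (Fin n) A)ˣ) : Matrix (Fin n) (Fin n) A)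
      = Matrix.diagonal d := by
    rw [hPinv, ← hMe]
    show b.toMatrix e * LinearMap.toMatrix e e f * e.toMatrix b = _
    rw [basis_toMatrix_mul_linearMap_toMatrix_mul_basis_toMatrix, hdiag]
  refine ⟨P, ?_, ?_⟩
  · rw [key]; exact Matrix.isDiag_diagonal d
  · intro i
    rw [key, Matrix.diagonal_apply_eq]
    rcases h : eIdx.symm i with j | j
    · right; simp [d, h]
    · left; simp [d, h]
end

section
/- Let A be a Prüfer domain, i.e., an integral domain in which every finitely generated ideal 𝔞 is locally principal (there exist f₁, …, f_n ∈ A with 1 = f₁ + ⋯ + f_n such that for each i the ideal generated by the image of 𝔞 in A[f_i⁻¹] is a principal ideal). Then every matrix M over A can locally be brought into diagonal form: there exist g₁, …, g_k ∈ A with 1 = g₁ + ⋯ + g_k such that for each i there are invertible matrices P, Q over A[g_i⁻¹] with all entries of P·M·Q off the main diagonal equal to zero (M regarded as a matrix over A[g_i⁻¹]). -/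
/-!
Induct on the size of the matrix, working locally on `Spec R`. On the members of a cover the
entries `xᵢ` of `M` generate a principal ideal `(α)`; writing `α = ∑ cᵢ xᵢ` and `xᵢ = α qᵢ`,
the elements `1 - ∑ cᵢ qᵢ` and `cᵢ qᵢ` generate the unit ideal. Over the first one `α`, hence `M`,
vanishes; over `cᵢ qᵢ` the entry `xᵢ` divides all the others. Such a pivot is moved to the corner
by permutations and its row and column are cleared by unipotent transformations, leaving a
smaller matrix over a localization, where finitely generated ideals are still locally principal.
Covers of the members of a cover form a cover, so the local diagonal forms obtained at each step
combine.
-/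

namespace Matrix

variable {R S : Type*} [CommRing R] [CommRing S] {n m : ℕ}

def HasDiagonalForm (M : Matrix (Fin n) (Fin m) R) : Prop :=
  ∃ (P : Matrix (Fin n) (Fin n) R) (Q : Matrix (Fin m) (Fin m) R), IsUnit P ∧ IsUnit Q ∧
    ∀ (r : Fin n) (c : Fin m), (r : ℕ) ≠ c → (P * M * Q) r c = 0

namespace HasDiagonalForm

variable {M : Matrix (Fin n) (Fin m) R}

theorem of_forall_ne (h : ∀ (r : Fin n) (c : Fin m), (r : ℕ) ≠ c → M r c = 0) :
    M.HasDiagonalForm :=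
  ⟨1, 1, isUnit_one, isUnit_one, by simpa using h⟩

theorem map (h : M.HasDiagonalForm) (φ : R →+* S) : (M.map φ).HasDiagonalForm := by
  obtain ⟨P, Q, hP, hQ, hPQ⟩ := h
  refine ⟨P.map φ, Q.map φ, hP.map φ.mapMatrix, hQ.map φ.mapMatrix, fun r c hrc => ?_⟩
  rw [← Matrix.map_mul, ← Matrix.map_mul, Matrix.map_apply, hPQ r c hrc, map_zero]

theorem of_isUnit_mul_mul {U : Matrix (Fin n) (Fin n) R} {V : Matrix (Fin m) (Fin m) R}
    (hU : IsUnit U) (hV : IsUnit V) (h : (U * M * V).HasDiagonalForm) : M.HasDiagonalForm := by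
  obtain ⟨P, Q, hP, hQ, hPQ⟩ := h
  exact ⟨P * U, V * Q, hP.mul hU, hV.mul hQ, by simpa only [Matrix.mul_assoc] using hPQ⟩

end HasDiagonalForm

/-- The block diagonal matrix `diag(1, P)`. -/
def oneBlockDiagonal : Matrix (Fin n) (Fin n) R →* Matrix (Fin (n + 1)) (Fin (n + 1)) R where
  toFun P := Matrix.of fun i j => Fin.cases (Fin.cases 1 0 j) (fun i' => Fin.cases 0 (P i') j) i
  map_one' := by
    ext i j
    induction i using Fin.cases <;> induction j using Fin.cases <;>
      simp [one_apply, (Fin.succ_ne_zero _).symm]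
  map_mul' P Q := by
    ext i j
    induction i using Fin.cases <;> induction j using Fin.cases <;>
      simp [Matrix.mul_apply, Fin.sum_univ_succ]

theorem HasDiagonalForm.of_corner {M : Matrix (Fin (n + 1)) (Fin (m + 1)) R}
    (hcol : ∀ i : Fin n, M i.succ 0 = 0) (hrow : ∀ j : Fin m, M 0 j.succ = 0)
    (h : (M.submatrix Fin.succ Fin.succ).HasDiagonalForm) : M.HasDiagonalForm := by
  obtain ⟨P, Q, hP, hQ, hPQ⟩ := h
  refine ⟨oneBlockDiagonal P, oneBlockDiagonal Q, hP.map _, hQ.map _, fun r c hrc => ?_⟩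
  induction r using Fin.cases with
  | zero =>
    induction c using Fin.cases with
    | zero => exact absurd rfl hrc
    | succ j => simp [oneBlockDiagonal, Matrix.mul_apply, Fin.sum_univ_succ, hrow]
  | succ i =>
    induction c using Fin.cases with
    | zero => simp [oneBlockDiagonal, Matrix.mul_apply, Fin.sum_univ_succ, hcol]
    | succ j =>
      simpa [oneBlockDiagonal, Matrix.mul_apply, Fin.sum_univ_succ, hcol, hrow]
        using hPQ i j (by simpa using hrc)

theorem exists_isUnit_clear_column {κ : Type*} (M : Matrix (Fin (n + 1)) κ R) (j : κ)
    (hdvd : ∀ i, M 0 j ∣ M i j) :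
    ∃ U : Matrix (Fin (n + 1)) (Fin (n + 1)) R,
      IsUnit U ∧ (∀ i : Fin n, (U * M) i.succ j = 0) ∧ (U * M) 0 = M 0 := by
  choose w hw using fun i : Fin n => hdvd i.succ
  let q : Fin (n + 1) → R := Fin.cons 0 w
  let N : Matrix (Fin (n + 1)) (Fin (n + 1)) R := of fun i k => if k = 0 then q i else 0
  have hN (i k) : (N * M) i k = q i * M 0 k := by
    simp [N, mul_apply]
  have hNN : N * N = 0 := by
    ext i k
    simp [N, q, mul_apply]
  refine ⟨1 - N, (IsNilpotent.isUnit_one_sub ⟨2, by rw [pow_two, hNN]⟩), fun i => ?_, ?_⟩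
  · rw [Matrix.sub_mul, Matrix.one_mul, sub_apply, hN, hw]
    simp [q, mul_comm]
  · ext k
    simp [Matrix.sub_mul, hN, q]

theorem exists_isUnit_clear_row {ι : Type*} (M : Matrix ι (Fin (m + 1)) R) (i : ι)
    (hdvd : ∀ j, M i 0 ∣ M i j) :
    ∃ V : Matrix (Fin (m + 1)) (Fin (m + 1)) R,
      IsUnit V ∧ (∀ j : Fin m, (M * V) i j.succ = 0) ∧ ∀ k, (M * V) k 0 = M k 0 := by
  obtain ⟨U, hU, hcol, hrow⟩ := exists_isUnit_clear_column Mᵀ i hdvd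
  have hMU : M * Uᵀ = (U * Mᵀ)ᵀ := by rw [transpose_mul, transpose_transpose]
  refine ⟨Uᵀ, (isUnit_transpose U).mpr hU, fun j => ?_, fun k => ?_⟩
  · rw [hMU, transpose_apply, hcol]
  · rw [hMU, transpose_apply, hrow, transpose_apply]

theorem exists_isUnit_clear_pivot (M : Matrix (Fin (n + 1)) (Fin (m + 1)) R) {r c}
    (hdvd : ∀ s t, M r c ∣ M s t) :
    ∃ (U : Matrix (Fin (n + 1)) (Fin (n + 1)) R) (V : Matrix (Fin (m + 1)) (Fin (m + 1)) R),
      IsUnit U ∧ IsUnit V ∧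
      (∀ i : Fin n, (U * M * V) i.succ 0 = 0) ∧ ∀ j : Fin m, (U * M * V) 0 j.succ = 0 := by
  have isUnit_permMatrix {k : ℕ} (σ : Equiv.Perm (Fin k)) : IsUnit (σ.permMatrix R) := by
    simpa using (Group.isUnit σ⁻¹).map (permMatrixHom (n := Fin k) (R := R))
  set σ := Equiv.swap 0 r
  set ρ := Equiv.swap 0 c
  set M₀ := σ.permMatrix R * M * ρ.permMatrix R
  have hM₀ (i j) : M₀ i j = M (σ i) (ρ j) := by
    simp [M₀, PEquiv.toMatrix_toPEquiv_mul, PEquiv.mul_toMatrix_toPEquiv, ρ]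
  have hpivot : M₀ 0 0 = M r c := by simp [hM₀, σ, ρ]
  obtain ⟨U, hU, hcol, hrow₀⟩ :=
    exists_isUnit_clear_column M₀ 0 fun i => hpivot ▸ (hM₀ i 0).symm ▸ hdvd _ _
  obtain ⟨V, hV, hrow, hcol₀⟩ := exists_isUnit_clear_row (U * M₀) 0 fun j => by
    rw [hrow₀, hpivot, hM₀]; exact hdvd _ _
  refine ⟨U * σ.permMatrix R, ρ.permMatrix R * V, hU.mul (isUnit_permMatrix σ),
    (isUnit_permMatrix ρ).mul hV, ?_⟩
  have hUMV : U * σ.permMatrix R * M * (ρ.permMatrix R * V) = U * M₀ * V := by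
    simp only [M₀, Matrix.mul_assoc]
  rw [hUMV]
  exact ⟨fun i => (hcol₀ i.succ).trans (hcol i), hrow⟩

end Matrix

namespace Ideal

variable {R : Type*} [CommRing R]

def IsLocallyPrincipal (I : Ideal R) : Prop :=
  span {g : R | (I.map (algebraMap R (Localization.Away g))).IsPrincipal} = ⊤

theorem FG.exists_map_algebraMap_eq {u : R} {J : Ideal (Localization.Away u)} (hJ : J.FG) :
    ∃ I : Ideal R, I.FG ∧ I.map (algebraMap R (Localization.Away u)) = J := by
  obtain ⟨s, hs, rfl⟩ := Submodule.fg_def.mp hJ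
  have hnum (y : Localization.Away u) :=
    IsLocalization.Away.associated_sec_fst (S := Localization.Away u) u y
  refine ⟨span ((fun y => (IsLocalization.Away.sec u y).1) '' s),
    Submodule.fg_span (hs.image _), ?_⟩
  rw [map_span, Set.image_image, submodule_span_eq]
  apply le_antisymm <;> rw [span_le]
  · rintro _ ⟨y, hy, rfl⟩
    exact mem_of_dvd _ (hnum y).symm.dvd (subset_span hy)
  · intro y hy
    exact mem_of_dvd _ (hnum y).dvd (subset_span ⟨y, hy, rfl⟩)

theorem IsLocallyPrincipal.map_away {I : Ideal R} (h : I.IsLocallyPrincipal) (u : R) :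
    (I.map (algebraMap R (Localization.Away u))).IsLocallyPrincipal := by
  have hspan := congrArg (map (algebraMap R (Localization.Away u))) h
  rw [map_span, map_top] at hspan
  refine eq_top_mono (span_mono (Set.image_subset_iff.mpr fun g hg => ?_)) hspan
  replace hg : (I.map (algebraMap R (Localization.Away g))).IsPrincipal := hg
  let T := Localization.Away (algebraMap R (Localization.Away u) g)
  have hg' : IsUnit ((algebraMap _ T).comp (algebraMap R (Localization.Away u)) g) :=
    IsLocalization.Away.algebraMap_isUnit (algebraMap R (Localization.Away u) g)
  show ((I.map (algebraMap R (Localization.Away u))).map (algebraMap _ T)).IsPrincipal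
  rw [map_map, ← IsLocalization.Away.lift_comp (S := Localization.Away g) g hg', ← map_map]
  exact hg.map_ringHom _

theorem isLocallyPrincipal_of_fg_away (hR : ∀ I : Ideal R, I.FG → I.IsLocallyPrincipal) (u : R)
    (J : Ideal (Localization.Away u)) (hJ : J.FG) : J.IsLocallyPrincipal := by
  obtain ⟨I, hI, rfl⟩ := hJ.exists_map_algebraMap_eq
  exact (hR I hI).map_away u

end Ideal

theorem span_exists_dvd_forall_away_eq_top {R ι : Type*} [CommRing R] [Fintype ι] [Nonempty ι]
    {x : ι → R} (h : (Ideal.span (Set.range x)).IsPrincipal) :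
    Ideal.span {g : R | ∃ i, ∀ j, algebraMap R (Localization.Away g) (x i) ∣
      algebraMap R (Localization.Away g) (x j)} = ⊤ := by
  obtain ⟨α, hα⟩ := h
  rw [Ideal.submodule_span_eq] at hα
  choose q hq using fun j => Ideal.mem_span_singleton.mp (hα ▸ Ideal.subset_span ⟨j, rfl⟩ :
    x j ∈ Ideal.span {α})
  obtain ⟨c, hc⟩ := Ideal.mem_span_range_iff_exists_fun.mp
    (hα ▸ Ideal.mem_span_singleton_self α : α ∈ Ideal.span (Set.range x))
  set u := ∑ i, c i * q i
  have hαu : α * (1 - u) = 0 := by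
    have : α * u = ∑ i, c i * x i := by
      simp only [u, Finset.mul_sum, hq]
      exact Finset.sum_congr rfl fun i _ => by ring
    rw [mul_sub, mul_one, this, hc, sub_self]
  have h₀ : algebraMap R (Localization.Away (1 - u)) α = 0 :=
    (IsLocalization.Away.algebraMap_isUnit (1 - u)).mul_left_eq_zero.mp
      (by rw [← map_mul, hαu, map_zero])
  rw [Ideal.eq_top_iff_one, show (1 : R) = (1 - u) + u by ring]
  refine add_mem (Ideal.subset_span ⟨Classical.arbitrary ι, fun j => ?_⟩)
    (sum_mem fun i _ => Ideal.subset_span ⟨i, fun j => ?_⟩)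
  · rw [hq j, map_mul, h₀, zero_mul]
    exact dvd_zero _
  · have hqi : IsUnit (algebraMap R (Localization.Away (c i * q i)) (q i)) :=
      IsLocalization.Away.isUnit_of_dvd _ (dvd_mul_left (q i) (c i))
    rw [hq i, hq j, map_mul, map_mul, hqi.mul_right_dvd]
    exact dvd_mul_right _ _

namespace Matrix

variable {R S : Type*} [CommRing R] [CommRing S] {n m : ℕ}

def LocallyHasDiagonalForm (M : Matrix (Fin n) (Fin m) R) : Prop :=
  Ideal.span {g : R | (M.map (algebraMap R (Localization.Away g))).HasDiagonalForm} = ⊤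

theorem HasDiagonalForm.map_of_isUnit {M : Matrix (Fin n) (Fin m) R} {g : R}
    (h : (M.map (algebraMap R (Localization.Away g))).HasDiagonalForm) (f : R →+* S)
    (hg : IsUnit (f g)) : (M.map f).HasDiagonalForm := by
  simpa [Matrix.map_map, ← RingHom.coe_comp, IsLocalization.Away.lift_comp]
    using h.map (IsLocalization.Away.lift g hg)

namespace LocallyHasDiagonalForm

theorem of_hasDiagonalForm {M : Matrix (Fin n) (Fin m) R} (h : M.HasDiagonalForm) :
    M.LocallyHasDiagonalForm :=
  Ideal.eq_top_of_isUnit_mem _ (Ideal.subset_span (h.map _)) isUnit_one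

theorem of_isUnit_mul_mul {M : Matrix (Fin n) (Fin m) R} {U : Matrix (Fin n) (Fin n) R}
    {V : Matrix (Fin m) (Fin m) R} (hU : IsUnit U) (hV : IsUnit V)
    (h : (U * M * V).LocallyHasDiagonalForm) : M.LocallyHasDiagonalForm := by
  refine eq_top_mono (Ideal.span_mono
    fun g (hg : ((U * M * V).map (algebraMap R (Localization.Away g))).HasDiagonalForm) => ?_) h
  rw [Matrix.map_mul, Matrix.map_mul] at hg
  exact hg.of_isUnit_mul_mul (hU.map (algebraMap R _).mapMatrix)
    (hV.map (algebraMap R _).mapMatrix)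

theorem of_corner {M : Matrix (Fin (n + 1)) (Fin (m + 1)) R}
    (hcol : ∀ i : Fin n, M i.succ 0 = 0) (hrow : ∀ j : Fin m, M 0 j.succ = 0)
    (h : (M.submatrix Fin.succ Fin.succ).LocallyHasDiagonalForm) : M.LocallyHasDiagonalForm :=
  eq_top_mono (Ideal.span_mono fun _ hg =>
    HasDiagonalForm.of_corner (by simp [hcol]) (by simp [hrow]) (by rwa [submatrix_map])) h

theorem of_dvd {M : Matrix (Fin (n + 1)) (Fin (m + 1)) R} {r c} (hdvd : ∀ s t, M r c ∣ M s t)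
    (h : ∀ N : Matrix (Fin n) (Fin m) R, N.LocallyHasDiagonalForm) : M.LocallyHasDiagonalForm := by
  obtain ⟨U, V, hU, hV, hcol, hrow⟩ := exists_isUnit_clear_pivot M hdvd
  exact of_isUnit_mul_mul hU hV (of_corner hcol hrow (h _))

theorem of_locally {M : Matrix (Fin n) (Fin m) R}
    (h : Ideal.span {g : R |
      (M.map (algebraMap R (Localization.Away g))).LocallyHasDiagonalForm} = ⊤) :
    M.LocallyHasDiagonalForm := by
  refine eq_top_mono (Ideal.span_mono ?_) (IsLocalization.Away.span_range_mulNumerator_eq_top h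
    (Rₜ := fun t => Localization.Away t.val) fun t => t.2)
  -- the members of the combined cover are the `t * a`, with `a` a numerator of `y ∈ R[1/t]`
  rintro _ ⟨⟨⟨t, -⟩, ⟨y, hy⟩⟩, rfl⟩
  set a := (IsLocalization.Away.sec t y).1
  show (M.map (algebraMap R (Localization.Away (t * a)))).HasDiagonalForm
  let f : Localization.Away t →+* Localization.Away (t * a) :=
    IsLocalization.Away.awayToAwayRight t a
  have hf : f.comp (algebraMap R _) = algebraMap R _ :=
    RingHom.ext (IsLocalization.Away.awayToAwayRight_eq t a)
  have hfy : IsUnit (f y) := by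
    have hya := congrArg f (IsLocalization.Away.sec_spec t y)
    rw [map_mul, ← RingHom.comp_apply, ← RingHom.comp_apply, hf] at hya
    exact isUnit_of_mul_isUnit_left
      (hya ▸ IsLocalization.Away.isUnit_of_dvd _ (dvd_mul_left a t))
  have := hy.map_of_isUnit f hfy
  rwa [Matrix.map_map, ← RingHom.coe_comp, hf] at this

end LocallyHasDiagonalForm

theorem locallyHasDiagonalForm_of_isLocallyPrincipal
    (hR : ∀ I : Ideal R, I.FG → I.IsLocallyPrincipal) (M : Matrix (Fin n) (Fin m) R) :
    M.LocallyHasDiagonalForm := by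
  induction n generalizing R m with
  | zero => exact .of_hasDiagonalForm (.of_forall_ne fun r => r.elim0)
  | succ n ih =>
    cases m with
    | zero => exact .of_hasDiagonalForm (.of_forall_ne fun _ c => c.elim0)
    | succ m =>
      let x : Fin (n + 1) × Fin (m + 1) → R := fun p => M p.1 p.2
      refine .of_locally (eq_top_mono (Ideal.span_mono fun f hf => ?_)
        (hR _ (Submodule.fg_span (Set.finite_range x))))
      replace hf :
        ((Ideal.span (Set.range x)).map (algebraMap R (Localization.Away f))).IsPrincipal := hf
      rw [Ideal.map_span, ← Set.range_comp] at hf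
      refine .of_locally (eq_top_mono (Ideal.span_mono fun g hg => ?_)
        (span_exists_dvd_forall_away_eq_top hf))
      obtain ⟨p, hp⟩ := hg
      exact .of_dvd (fun s t => hp (s, t))
        (ih (Ideal.isLocallyPrincipal_of_fg_away (Ideal.isLocallyPrincipal_of_fg_away hR f) g))

end Matrix

theorem matrix_locally_diagonal_form_of_pruefer_general {A : Type*} [CommRing A]
    (hpruefer : ∀ a : Ideal A, a.FG →
      ∃ (p : ℕ) (f : Fin p → A), ∑ i, f i = 1 ∧
        ∀ i, (a.map (algebraMap A (Localization.Away (f i)))).IsPrincipal)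
    {n m : ℕ} (M : Matrix (Fin n) (Fin m) A) :
    ∃ (k : ℕ) (g : Fin k → A), ∑ i, g i = 1 ∧
      ∀ i : Fin k,
        ∃ (P : (Matrix (Fin n) (Fin n) (Localization.Away (g i)))ˣ)
          (Q : (Matrix (Fin m) (Fin m) (Localization.Away (g i)))ˣ),
          ∀ (r : Fin n) (c : Fin m), (r : ℕ) ≠ (c : ℕ) →
            ((P : Matrix (Fin n) (Fin n) (Localization.Away (g i))) *
              M.map (algebraMap A (Localization.Away (g i))) *
              (Q : Matrix (Fin m) (Fin m) (Localization.Away (g i)))) r c = 0 := by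
  have hA (I : Ideal A) (hI : I.FG) : I.IsLocallyPrincipal := by
    obtain ⟨p, f, hsum, hf⟩ := hpruefer I hI
    rw [Ideal.IsLocallyPrincipal, Ideal.eq_top_iff_one, ← hsum]
    exact Ideal.sum_mem _ fun i _ => Ideal.subset_span (hf i)
  obtain ⟨k, c, g, hcg⟩ := Submodule.mem_span_set'.mp
    ((Ideal.eq_top_iff_one _).mp (M.locallyHasDiagonalForm_of_isLocallyPrincipal hA))
  refine ⟨k, fun i => c i * g i, hcg, fun i => ?_⟩
  obtain ⟨_, _, ⟨P, rfl⟩, ⟨Q, rfl⟩, hPQ⟩ := (g i).2.map_of_isUnit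
    (algebraMap A (Localization.Away (c i * g i)))
    (IsLocalization.Away.isUnit_of_dvd _ (dvd_mul_left (g i : A) (c i)))
  exact ⟨P, Q, hPQ⟩

/-- Over a Prüfer domain (an integral domain in which every finitely generated ideal is
locally principal), every matrix can locally be brought into diagonal form by invertible
row and column transformations. -/
theorem matrix_locally_diagonal_form_of_pruefer {A : Type*} [CommRing A] [IsDomain A]
    (hpruefer : ∀ a : Ideal A, a.FG →
      ∃ (p : ℕ) (f : Fin p → A), ∑ i, f i = 1 ∧
        ∀ i, (a.map (algebraMap A (Localization.Away (f i)))).IsPrincipal)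
    {n m : ℕ} (M : Matrix (Fin n) (Fin m) A) :
    ∃ (k : ℕ) (g : Fin k → A), ∑ i, g i = 1 ∧
      ∀ i : Fin k,
        ∃ (P : (Matrix (Fin n) (Fin n) (Localization.Away (g i)))ˣ)
          (Q : (Matrix (Fin m) (Fin m) (Localization.Away (g i)))ˣ),
          ∀ (r : Fin n) (c : Fin m), (r : ℕ) ≠ (c : ℕ) →
            ((P : Matrix (Fin n) (Fin n) (Localization.Away (g i))) *
              M.map (algebraMap A (Localization.Away (g i))) *
              (Q : Matrix (Fin m) (Fin m) (Localization.Away (g i)))) r c = 0 :=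
  matrix_locally_diagonal_form_of_pruefer_general hpruefer M
end
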